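/- (Theorem 1.) Let M ≥ 1 and let B_1, …, B_M > 0 be the radio bandwidths to the M MEC devices, with i* an index achieving the maximum bandwidth B_{i*} = max_{1 ≤ i ≤ M} B_i. Fix reals C > 0, N > 0, f > 0, ς > 0, P ≥ 0, β ≥ 0, μ ≥ 0, ψ ≥ 0, b ∈ ℝ, ρ ∈ ℝ. Suppose max((μ + β·P)/(β·ς·N·f² + 1), 1/(ς·N·f²)) ≤ B_{i*} and suppose the battery suffices at full offloading to i*: b − P·C/B_{i*} + ρ > 0. Then the action of offloading the entire task to MEC device i* is optimal: for every index i ∈ {1,…,M} and every x ∈ [0,1], Û_{B_i}(x) ≤ Û_{B_{i*}}(1), and the optimal utility equals Û_{B_{i*}}(1) = C·(B_{i*} − β·P − μ)/B_{i*}. -/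

import Mathlib

/-!
Dropping the task can only lower the utility, and at full offloading to the widest link the
battery condition rules the drop out, so it suffices to compare deterministic utilities. These
grow with the bandwidth, and for fixed bandwidth `B` the delay term is at least its transmission
part `μ x C / B`; with that lower bound the utility becomes affine in `x` with slope
`C ((β ς N f² + 1) B - (μ + β P)) / B`, which the bandwidth condition makes nonnegative.
-/

noncomputable def U (C N f ς P β μ B x : ℝ) : ℝ :=
  x * C - β * (ς * C * N * f ^ 2 * (1 - x) + P * x * C / B) -
    μ * max ((1 - x) * C * N / f) (x * C / B)

noncomputable def Uhat (C N f ς P β μ ψ b ρ B x : ℝ) : ℝ :=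
  U C N f ς P β μ B x -
    ψ * (if b - (ς * C * N * f ^ 2 * (1 - x) + P * x * C / B) + ρ ≤ 0 then 1 else 0)

section Utility

variable {C N f ς P β μ ψ b ρ B x : ℝ}

theorem Uhat_le_U (hψ : 0 ≤ ψ) : Uhat C N f ς P β μ ψ b ρ B x ≤ U C N f ς P β μ B x := by
  unfold Uhat
  split_ifs <;> linarith

theorem Uhat_eq_U (hbatt : 0 < b - (ς * C * N * f ^ 2 * (1 - x) + P * x * C / B) + ρ) :
    Uhat C N f ς P β μ ψ b ρ B x = U C N f ς P β μ B x := by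
  rw [Uhat, if_neg hbatt.not_ge, mul_zero, sub_zero]

theorem U_one (hC : 0 ≤ C) (hB : 0 < B) :
    U C N f ς P β μ B 1 = C * (B - β * P - μ) / B := by
  have hdelay : max ((1 - 1) * C * N / f) (1 * C / B) = C / B := by
    rw [sub_self, zero_mul, zero_mul, zero_div, one_mul]
    exact max_eq_right (by positivity)
  rw [U, hdelay]
  field_simp
  ring

theorem U_monotoneOn_bandwidth (hC : 0 ≤ C) (hP : 0 ≤ P) (hβ : 0 ≤ β) (hμ : 0 ≤ μ)
    (hx : 0 ≤ x) : MonotoneOn (fun B ↦ U C N f ς P β μ B x) (Set.Ioi 0) := by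
  intro B hB B' _ hBB'
  simp only [U]
  gcongr

theorem U_le_U_one (hC : 0 ≤ C) (hμ : 0 ≤ μ) (hB : 0 < B)
    (hslope : μ + β * P ≤ (β * ς * N * f ^ 2 + 1) * B) (hx : x ∈ Set.Icc (0 : ℝ) 1) :
    U C N f ς P β μ B x ≤ U C N f ς P β μ B 1 := by
  obtain ⟨_, hx1⟩ := hx
  have hdelay : x * C / B ≤ max ((1 - x) * C * N / f) (x * C / B) := le_max_right _ _
  have hgap : C * (B - β * P - μ) / B -
      (x * C - β * (ς * C * N * f ^ 2 * (1 - x) + P * x * C / B) - μ * (x * C / B)) =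
      (1 - x) * C * ((β * ς * N * f ^ 2 + 1) * B - (μ + β * P)) / B := by
    field_simp
    ring
  have hgap_nonneg : 0 ≤ (1 - x) * C * ((β * ς * N * f ^ 2 + 1) * B - (μ + β * P)) / B := by
    have hslope' : 0 ≤ (β * ς * N * f ^ 2 + 1) * B - (μ + β * P) := sub_nonneg.mpr hslope
    have hx1' : 0 ≤ 1 - x := sub_nonneg.mpr hx1
    positivity
  rw [U_one hC hB, U]
  linarith [mul_le_mul_of_nonneg_left hdelay hμ]

end Utility

theorem stmt_12_general (M : ℕ) (B : Fin M → ℝ) (hBpos : ∀ i, 0 < B i)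
    (istar : Fin M) (hmax : ∀ i, B i ≤ B istar)
    (C N f ς P β μ ψ b ρ : ℝ) (hC : 0 < C) (hN : 0 < N)
    (hς : 0 < ς) (hP : 0 ≤ P) (hβ : 0 ≤ β) (hμ : 0 ≤ μ) (hψ : 0 ≤ ψ)
    (hcond : max ((μ + β * P) / (β * ς * N * f ^ 2 + 1)) (1 / (ς * N * f ^ 2)) ≤ B istar)
    (hbatt : 0 < b - P * C / B istar + ρ) :
    (∀ i : Fin M, ∀ x ∈ Set.Icc (0:ℝ) 1,
      Uhat C N f ς P β μ ψ b ρ (B i) x ≤ Uhat C N f ς P β μ ψ b ρ (B istar) 1) ∧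
    Uhat C N f ς P β μ ψ b ρ (B istar) 1 = C * (B istar - β * P - μ) / B istar := by
  have hslope : μ + β * P ≤ (β * ς * N * f ^ 2 + 1) * B istar := by
    rw [← div_le_iff₀' (by positivity)]
    exact (le_max_left _ _).trans hcond
  have hfull : Uhat C N f ς P β μ ψ b ρ (B istar) 1 = U C N f ς P β μ (B istar) 1 :=
    Uhat_eq_U (by simpa using hbatt)
  refine ⟨fun i x hx ↦ ?_, hfull.trans (U_one hC.le (hBpos istar))⟩
  calc Uhat C N f ς P β μ ψ b ρ (B i) x ≤ U C N f ς P β μ (B i) x := Uhat_le_U hψ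
    _ ≤ U C N f ς P β μ (B istar) x :=
      U_monotoneOn_bandwidth hC.le hP hβ hμ hx.1 (hBpos i) (hBpos istar) (hmax i)
    _ ≤ U C N f ς P β μ (B istar) 1 := U_le_U_one hC.le hμ (hBpos istar) hslope hx
    _ = Uhat C N f ς P β μ ψ b ρ (B istar) 1 := hfull.symm

theorem stmt_12 (M : ℕ) (hM : 1 ≤ M) (B : Fin M → ℝ) (hBpos : ∀ i, 0 < B i)
    (istar : Fin M) (hmax : ∀ i, B i ≤ B istar)
    (C N f ς P β μ ψ b ρ : ℝ) (hC : 0 < C) (hN : 0 < N) (hf : 0 < f)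
    (hς : 0 < ς) (hP : 0 ≤ P) (hβ : 0 ≤ β) (hμ : 0 ≤ μ) (hψ : 0 ≤ ψ)
    (hcond : max ((μ + β * P) / (β * ς * N * f ^ 2 + 1)) (1 / (ς * N * f ^ 2)) ≤ B istar)
    (hbatt : 0 < b - P * C / B istar + ρ) :
    (∀ i : Fin M, ∀ x ∈ Set.Icc (0:ℝ) 1,
      Uhat C N f ς P β μ ψ b ρ (B i) x ≤ Uhat C N f ς P β μ ψ b ρ (B istar) 1) ∧
    Uhat C N f ς P β μ ψ b ρ (B istar) 1 = C * (B istar - β * P - μ) / B istar :=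
  stmt_12_general M B hBpos istar hmax C N f ς P β μ ψ b ρ hC hN hς hP hβ hμ hψ hcond hbatt
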